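/- arXiv:1905.05434 — 7 statements merged into one kernel-verified Lean document; each statement's English description precedes it below -/
import Mathlib

section
/- Let (Ω, ℙ) be a probability space and let h₀, h₁, …, h_κ be independent random variables, each exponentially distributed with rate 1, with κ ≥ 1. Let p₀λ₀ > 0 and p_iλ_i > 0 for i = 1, …, κ. Then for every γ ≥ 0, ℙ[ p₀λ₀ h₀ < γ · Σ_{i=1}^{κ} p_iλ_i h_i ] ≤ 1 − (1 + γ · (Σ_{i=1}^{κ} p_iλ_i)/(κ p₀λ₀))^{−κ}. -/
/-!
Put `bᵢ = γ cᵢ / s`. The event is `h₀ < Y` with `Y = ∑ bᵢ hᵢ₊₁`, which is nonnegative and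
independent of `h₀`; conditioning on `Y` gives `ℙ[h₀ < Y] = 1 - 𝔼[e^{-Y}]`. Independence factors
the Laplace transform as `𝔼[e^{-Y}] = ∏ (1 + bᵢ)⁻¹`, and AM-GM bounds `∏ (1 + bᵢ)` by
`(1 + (∑ bᵢ) / κ)^κ`.
-/

open MeasureTheory ProbabilityTheory Real Set

namespace Real

lemma prod_le_arith_mean_pow {ι : Type*} (s : Finset ι) (z : ι → ℝ) (hz : ∀ i ∈ s, 0 ≤ z i) :
    ∏ i ∈ s, z i ≤ ((∑ i ∈ s, z i) / s.card) ^ s.card := by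
  rcases s.eq_empty_or_nonempty with rfl | hs
  · simp
  have hcard : (0 : ℝ) < s.card := by exact_mod_cast hs.card_pos
  have := geom_mean_le_arith_mean s (fun _ ↦ 1) z (fun _ _ ↦ zero_le_one) (by simpa using hcard) hz
  simp only [rpow_one, one_mul, Finset.sum_const, nsmul_eq_mul, mul_one] at this
  calc ∏ i ∈ s, z i = ((∏ i ∈ s, z i) ^ (s.card : ℝ)⁻¹) ^ s.card := by
        rw [← rpow_natCast, ← rpow_mul (Finset.prod_nonneg hz), inv_mul_cancel₀ hcard.ne',
          rpow_one]
    _ ≤ _ := pow_le_pow_left₀ (rpow_nonneg (Finset.prod_nonneg hz) _) this _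

lemma one_add_mean_zpow_neg_le_prod_inv {n : ℕ} (b : Fin n → ℝ) (hb : ∀ i, 0 ≤ b i) :
    (1 + (∑ i, b i) / n) ^ (-(n : ℤ)) ≤ ∏ i, (1 + b i)⁻¹ := by
  rcases Nat.eq_zero_or_pos n with rfl | hn
  · simp
  have hmean : (∑ i, (1 + b i)) / n = 1 + (∑ i, b i) / n := by
    simp [Finset.sum_add_distrib, add_div, hn.ne']
  have hpos : ∀ i, 0 < 1 + b i := fun i ↦ by linarith [hb i]
  have := prod_le_arith_mean_pow Finset.univ (fun i ↦ 1 + b i) fun i _ ↦ (hpos i).le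
  rw [Finset.card_univ, Fintype.card_fin, hmean] at this
  rw [zpow_neg, zpow_natCast, Finset.prod_inv_distrib]
  exact inv_anti₀ (Finset.prod_pos fun i _ ↦ hpos i) this

end Real

namespace ProbabilityTheory

variable {r : ℝ}

lemma expMeasure_eq_withDensity (r : ℝ) : expMeasure r = volume.withDensity (exponentialPDF r) :=
  rfl

lemma measurable_exponentialPDF (r : ℝ) : Measurable (exponentialPDF r) :=
  (measurable_exponentialPDFReal r).ennreal_ofReal

lemma expMeasure_Ici (hr : 0 < r) {x : ℝ} (hx : 0 ≤ x) :
    expMeasure r (Ici x) = ENNReal.ofReal (exp (-r * x)) := by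
  have : IsProbabilityMeasure (expMeasure r) := isProbabilityMeasure_expMeasure hr
  have hx_null : expMeasure r {x} = 0 :=
    withDensity_absolutelyContinuous _ _ Real.volume_singleton
  rw [← compl_Iio, prob_compl_eq_one_sub measurableSet_Iio, measure_congr (Iio_ae_eq_Iic' hx_null),
    ← ofReal_cdf, cdf_expMeasure_eq hr, if_pos hx, ← ENNReal.ofReal_one,
    ← ENNReal.ofReal_sub _ (sub_nonneg.2 (exp_le_one_iff.2 ?_)), sub_sub_cancel, neg_mul]
  exact neg_nonpos.2 (mul_nonneg hr.le hx)

lemma ae_nonneg_expMeasure : ∀ᵐ x ∂expMeasure r, 0 ≤ x := by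
  simp only [ae_iff, not_le]
  exact (withDensity_apply _ measurableSet_Iio).trans (lintegral_exponentialPDF_of_nonpos le_rfl)

lemma exponentialPDF_mul_exp (hr : 0 < r) {t : ℝ} (ht : t < r) (x : ℝ) :
    exponentialPDF r x * ENNReal.ofReal (exp (t * x))
      = ENNReal.ofReal (r / (r - t)) * exponentialPDF (r - t) x := by
  rcases lt_or_ge x 0 with hx | hx
  · simp [exponentialPDF_of_neg hx]
  · have hrt : 0 < r - t := sub_pos.2 ht
    rw [exponentialPDF_of_nonneg hx, exponentialPDF_of_nonneg hx,
      ← ENNReal.ofReal_mul (by positivity), ← ENNReal.ofReal_mul (by positivity)]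
    congr 1
    field_simp
    rw [← exp_add]
    ring_nf

lemma lintegral_exp_mul_expMeasure (hr : 0 < r) {t : ℝ} (ht : t < r) :
    ∫⁻ x, ENNReal.ofReal (exp (t * x)) ∂expMeasure r = ENNReal.ofReal (r / (r - t)) := by
  rw [expMeasure_eq_withDensity, lintegral_withDensity_eq_lintegral_mul _
    (measurable_exponentialPDF r) (by fun_prop)]
  simp only [Pi.mul_apply, exponentialPDF_mul_exp hr ht]
  rw [lintegral_const_mul _ (measurable_exponentialPDF _),
    lintegral_exponentialPDF_eq_one (sub_pos.2 ht), mul_one]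

lemma mgf_id_expMeasure (hr : 0 < r) {t : ℝ} (ht : t < r) :
    mgf id (expMeasure r) t = r / (r - t) := by
  rw [mgf, integral_eq_lintegral_of_nonneg_ae (.of_forall fun _ ↦ (exp_pos _).le)
    (by fun_prop), ← ENNReal.toReal_ofReal (div_pos hr (sub_pos.2 ht)).le]
  exact congrArg _ (lintegral_exp_mul_expMeasure hr ht)

section RandomVariable

variable {Ω : Type*} [MeasurableSpace Ω] {P : Measure Ω} {X Y : Ω → ℝ}

lemma aemeasurable_of_map_eq_expMeasure (hr : 0 < r) (hX : P.map X = expMeasure r) :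
    AEMeasurable X P :=
  AEMeasurable.of_map_ne_zero (hX ▸ (isProbabilityMeasure_expMeasure hr).ne_zero)

lemma ae_nonneg_of_map_eq_expMeasure (hr : 0 < r) (hX : P.map X = expMeasure r) :
    0 ≤ᵐ[P] X :=
  ae_of_ae_map (p := (0 ≤ ·)) (aemeasurable_of_map_eq_expMeasure hr hX)
    (hX ▸ ae_nonneg_expMeasure)

lemma mgf_of_map_eq_expMeasure (hr : 0 < r) (hX : P.map X = expMeasure r) {t : ℝ} (ht : t < r) :
    mgf X P t = r / (r - t) := by
  rw [← mgf_id_map (aemeasurable_of_map_eq_expMeasure hr hX), hX, mgf_id_expMeasure hr ht]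

lemma measureReal_lt_of_indepFun_of_map_eq_expMeasure [IsProbabilityMeasure P] (hr : 0 < r)
    (hXY : IndepFun X Y P) (hX : P.map X = expMeasure r) (hY : AEMeasurable Y P)
    (hY0 : 0 ≤ᵐ[P] Y) :
    P.real {ω | X ω < Y ω} = 1 - mgf Y P (-r) := by
  have := isProbabilityMeasure_expMeasure hr
  have hXm := aemeasurable_of_map_eq_expMeasure hr hX
  have hS : MeasurableSet {p : ℝ × ℝ | p.2 ≤ p.1} := measurableSet_le measurable_snd measurable_fst
  have hle : P {ω | Y ω ≤ X ω} = ∫⁻ ω, ENNReal.ofReal (exp (-r * Y ω)) ∂P :=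
    calc P {ω | Y ω ≤ X ω} = P.map (fun ω ↦ (X ω, Y ω)) {p | p.2 ≤ p.1} :=
          (Measure.map_apply₀ (hXm.prodMk hY) hS.nullMeasurableSet).symm
      _ = ((expMeasure r).prod (P.map Y)) {p | p.2 ≤ p.1} := by
          rw [(indepFun_iff_map_prod_eq_prod_map_map hXm hY).1 hXY, hX]
      _ = ∫⁻ y, expMeasure r (Ici y) ∂P.map Y := Measure.prod_apply_symm hS
      _ = ∫⁻ y, ENNReal.ofReal (exp (-r * y)) ∂P.map Y := by
          refine lintegral_congr_ae ?_
          filter_upwards [(ae_map_iff hY measurableSet_Ici).2 hY0] with y hy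
          exact expMeasure_Ici hr hy
      _ = ∫⁻ ω, ENNReal.ofReal (exp (-r * Y ω)) ∂P := lintegral_map' (by fun_prop) hY
  have hmgf : mgf Y P (-r) = P.real {ω | Y ω ≤ X ω} := by
    rw [mgf, integral_eq_lintegral_of_nonneg_ae (.of_forall fun _ ↦ (exp_pos _).le) (by fun_prop),
      measureReal_def, hle]
  have hcompl : {ω | X ω < Y ω} = {ω | Y ω ≤ X ω}ᶜ := by ext; simp
  rw [hmgf, hcompl, measureReal_compl₀ (nullMeasurableSet_le hY hXm), probReal_univ]

lemma mgf_sum_mul_of_map_eq_expMeasure {ι : Type*} [Fintype ι] {X : ι → Ω → ℝ} (hr : 0 < r)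
    (hindep : iIndepFun X P) (hX : ∀ i, P.map (X i) = expMeasure r) (b : ι → ℝ) {t : ℝ}
    (hbt : ∀ i, b i * t < r) :
    mgf (fun ω ↦ ∑ i, b i * X i ω) P t = ∏ i, r / (r - b i * t) := by
  have hbX : iIndepFun (fun i ω ↦ b i * X i ω) P :=
    hindep.comp (fun i x ↦ b i * x) fun i ↦ measurable_const_mul _
  rw [← Finset.sum_fn,
    hbX.mgf_sum₀ fun i ↦ (aemeasurable_of_map_eq_expMeasure hr (hX i)).const_mul _]
  exact Finset.prod_congr rfl fun i _ ↦ by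
    rw [mgf_const_mul, mgf_of_map_eq_expMeasure hr (hX i) (hbt i)]

lemma iIndepFun.indepFun_zero_sum_succ {n : ℕ} {h : Fin (n + 1) → Ω → ℝ} (hindep : iIndepFun h P)
    (hmeas : ∀ i, AEMeasurable (h i) P) (b : Fin n → ℝ) :
    IndepFun (h 0) (fun ω ↦ ∑ j, b j * h j.succ ω) P := by
  let d : Fin (n + 1) → ℝ := Fin.cons 1 b
  have hd : iIndepFun (fun i ω ↦ d i * h i ω) P :=
    hindep.comp (fun i x ↦ d i * x) fun i ↦ measurable_const_mul _
  have := hd.indepFun_finsetSum_of_notMem₀ (fun i ↦ (hmeas i).const_mul _)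
    (s := Finset.univ.map (Fin.succEmb n)) (i := 0) (by simp)
  convert this.symm using 1
  · ext ω; simp [d]
  · ext ω; simp [d]

end RandomVariable

end ProbabilityTheory

theorem sir_cdf_upper_bound_general {Ω : Type*} [MeasurableSpace Ω] (P : Measure Ω)
    [IsProbabilityMeasure P]
    (κ : ℕ) (h : Fin (κ + 1) → Ω → ℝ)
    (hindep : iIndepFun h P)
    (hexp : ∀ i, Measure.map (h i) P = expMeasure 1)
    (s : ℝ) (hs : 0 < s) (c : Fin κ → ℝ) (hc : ∀ i, 0 < c i)
    (γ : ℝ) (hγ : 0 ≤ γ) :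
    (P {ω | s * h 0 ω < γ * ∑ i : Fin κ, c i * h i.succ ω}).toReal
      ≤ 1 - (1 + γ * (∑ i : Fin κ, c i) / (κ * s)) ^ (-(κ : ℤ)) := by
  have hae i := aemeasurable_of_map_eq_expMeasure one_pos (hexp i)
  set b : Fin κ → ℝ := fun i ↦ γ / s * c i
  have hb i : 0 ≤ b i := mul_nonneg (div_nonneg hγ hs.le) (hc i).le
  have hevent : {ω | s * h 0 ω < γ * ∑ i, c i * h i.succ ω}
      = {ω | h 0 ω < ∑ i, b i * h i.succ ω} := by
    ext ω
    have hsum : ∑ i, b i * h i.succ ω = γ * (∑ i, c i * h i.succ ω) / s := by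
      simp only [b, Finset.mul_sum, Finset.sum_div]
      exact Finset.sum_congr rfl fun i _ ↦ by ring
    change s * h 0 ω < _ ↔ h 0 ω < _
    rw [hsum, lt_div_iff₀ hs, mul_comm]
  have hY0 : 0 ≤ᵐ[P] fun ω ↦ ∑ i, b i * h i.succ ω := by
    filter_upwards [ae_all_iff.2 fun i ↦ ae_nonneg_of_map_eq_expMeasure one_pos (hexp i)]
      with ω hω
    exact Finset.sum_nonneg fun i _ ↦ mul_nonneg (hb i) (hω i.succ)
  have hmgf : mgf (fun ω ↦ ∑ i, b i * h i.succ ω) P (-1) = ∏ i, (1 + b i)⁻¹ := by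
    rw [mgf_sum_mul_of_map_eq_expMeasure one_pos (hindep.precomp (Fin.succ_injective κ))
      (fun i ↦ hexp i.succ) b fun i ↦ by linarith [hb i]]
    simp
  have hmean : γ * (∑ i, c i) / (κ * s) = (∑ i, b i) / κ := by
    simp only [b, ← Finset.mul_sum]; ring
  rw [hevent, ← measureReal_def, measureReal_lt_of_indepFun_of_map_eq_expMeasure one_pos
    (hindep.indepFun_zero_sum_succ hae b) (hexp 0) (by fun_prop) hY0, hmgf, hmean]
  linarith [one_add_mean_zpow_neg_le_prod_inv b hb]

/-- **Lomax-type SIR CDF upper bound (Theorem 1, eq. (8)).** For independent rate-1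
exponential gains, signal power `s = p₀λ₀ > 0` and interference powers `c i = pᵢλᵢ > 0`,
`ℙ[s h₀ < γ ∑ᵢ cᵢ hᵢ] ≤ 1 - (1 + γ (∑ᵢ cᵢ)/(κ s))^(-κ)`. -/
theorem sir_cdf_upper_bound {Ω : Type*} [MeasurableSpace Ω] (P : Measure Ω)
    [IsProbabilityMeasure P]
    (κ : ℕ) (hκ : 1 ≤ κ) (h : Fin (κ + 1) → Ω → ℝ) (hmeas : ∀ i, Measurable (h i))
    (hindep : iIndepFun h P)
    (hexp : ∀ i, Measure.map (h i) P = expMeasure 1)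
    (s : ℝ) (hs : 0 < s) (c : Fin κ → ℝ) (hc : ∀ i, 0 < c i)
    (γ : ℝ) (hγ : 0 ≤ γ) :
    (P {ω | s * h 0 ω < γ * ∑ i : Fin κ, c i * h i.succ ω}).toReal
      ≤ 1 - (1 + γ * (∑ i : Fin κ, c i) / (κ * s)) ^ (-(κ : ℤ)) :=
  sir_cdf_upper_bound_general P κ h hindep hexp s hs c hc γ hγ
end

section
/- Fix a real κ > 0 and an integer M ≥ 1. Let φ₁, …, φ_M be independent random variables on a probability space (Ω, ℙ), each Lomax distributed with shape κ and scale 1, i.e. each with law having density f(t) = κ (1 + t)^{−κ−1} for t ≥ 0 (and 0 for t < 0). Then for every x ≥ 0, ℙ[ Σ_{j=1}^{M} φ_j < x ] ≤ 1 − (1/(M−1)!) ∫_{Mκ ln(1 + x/M)}^{∞} t^{M−1} e^{−t} dt. -/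
/-!
Put `ψⱼ = κ log (1 + φⱼ)`. Since `ℙ[κ log (1 + φⱼ) ≤ c] = 1 - e^{-c}`, the `ψⱼ` are independent
standard exponentials, so `∑ ψⱼ` has the Erlang distribution with CDF
`1 - e^{-y} ∑_{k<M} y^k/k! = 1 - Γ(M, y)/(M-1)!`; this CDF is computed by induction on the number
of summands, convolving with one exponential law at a time. By concavity of `log` (AM–GM), on the
almost sure event `{φ ≥ 0}` the inequality `∑ φⱼ < x` forces `∑ ψⱼ ≤ Mκ log (1 + x/M)`.
-/

open MeasureTheory ProbabilityTheory Real Set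

noncomputable def expPartialSum (n : ℕ) (t : ℝ) : ℝ :=
  ∑ k ∈ Finset.range n, t ^ k / k.factorial

lemma expPartialSum_succ (n : ℕ) (t : ℝ) :
    expPartialSum (n + 1) t = expPartialSum n t + t ^ n / n.factorial :=
  Finset.sum_range_succ _ _

lemma expPartialSum_succ_zero (n : ℕ) : expPartialSum (n + 1) 0 = 1 := by
  simp [expPartialSum, Finset.sum_range_succ']

lemma continuous_expPartialSum (n : ℕ) : Continuous (expPartialSum n) := by
  unfold expPartialSum; fun_prop

lemma hasDerivAt_expPartialSum_succ (n : ℕ) (t : ℝ) :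
    HasDerivAt (expPartialSum (n + 1)) (expPartialSum n t) t := by
  induction n with
  | zero =>
    have hone : expPartialSum 1 = fun _ => 1 := by ext; simp [expPartialSum]
    simpa [hone, expPartialSum] using hasDerivAt_const t (1 : ℝ)
  | succ n ih =>
    have hpow : HasDerivAt (fun t : ℝ => t ^ (n + 1) / (n + 1).factorial)
        (t ^ n / n.factorial) t := by
      refine ((hasDerivAt_pow (n + 1) t).div_const _).congr_deriv ?_
      push_cast [Nat.factorial_succ]
      field_simp
    rw [expPartialSum_succ]
    exact (ih.fun_add hpow).congr_of_eventuallyEq (.of_forall (expPartialSum_succ _))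

lemma tendsto_exp_neg_mul_expPartialSum (n : ℕ) :
    Filter.Tendsto (fun t => exp (-t) * expPartialSum n t) Filter.atTop (nhds 0) := by
  simp_rw [expPartialSum, Finset.mul_sum, mul_div_assoc', mul_comm (exp _)]
  simpa using tendsto_finsetSum (Finset.range n) fun k _ =>
    (tendsto_pow_mul_exp_neg_atTop_nhds_zero k).div_const (k.factorial : ℝ)

lemma integral_Ici_pow_mul_exp_neg (n : ℕ) {y : ℝ} (hy : 0 ≤ y) :
    ∫ t in Ici y, t ^ n * exp (-t) = n.factorial * (exp (-y) * expPartialSum (n + 1) y) := by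
  have hderiv (t : ℝ) : HasDerivAt (fun u => -(n.factorial * (exp (-u) * expPartialSum (n + 1) u)))
      (t ^ n * exp (-t)) t := by
    refine (((hasDerivAt_neg t).exp.mul (hasDerivAt_expPartialSum_succ n t)).const_mul
      (n.factorial : ℝ)).neg.congr_deriv ?_
    rw [expPartialSum_succ]
    field_simp
    ring
  have hlim := ((tendsto_exp_neg_mul_expPartialSum (n + 1)).const_mul (n.factorial : ℝ)).neg
  rw [integral_Ici_eq_integral_Ioi, integral_Ioi_of_hasDerivAt_of_nonneg' (fun t _ => hderiv t)
    (fun t ht => by have : 0 ≤ t := hy.trans (le_of_lt ht); positivity) (by simpa using hlim)]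
  ring

noncomputable def erlangCDF (n : ℕ) (y : ℝ) : ℝ :=
  if 0 ≤ y then 1 - exp (-y) * expPartialSum n y else 0

lemma erlangCDF_nonneg (n : ℕ) (y : ℝ) : 0 ≤ erlangCDF n y := by
  unfold erlangCDF
  split_ifs with hy
  · have := mul_le_mul_of_nonneg_left (sum_le_exp_of_nonneg hy n) (exp_nonneg (-y))
    rw [← exp_add, neg_add_cancel, exp_zero] at this
    exact sub_nonneg.2 this
  · exact le_rfl

lemma erlangCDF_eq_one_sub_integral_Ici {n : ℕ} (hn : 1 ≤ n) {y : ℝ} (hy : 0 ≤ y) :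
    erlangCDF n y = 1 - 1 / (n - 1).factorial * ∫ t in Ici y, t ^ (n - 1) * exp (-t) := by
  rw [integral_Ici_pow_mul_exp_neg _ hy, Nat.sub_add_cancel hn, erlangCDF, if_pos hy]
  field_simp

lemma exp_neg_mul_erlangCDF_sub (n : ℕ) {x y : ℝ} (hxy : x ≤ y) :
    exp (-x) * erlangCDF n (y - x) = exp (-x) - exp (-y) * expPartialSum n (y - x) := by
  rw [erlangCDF, if_pos (sub_nonneg.2 hxy), mul_sub, mul_one, ← mul_assoc, ← exp_add]
  ring_nf

lemma integral_exp_neg_sub_expPartialSum (n : ℕ) (y : ℝ) :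
    ∫ x in (0 : ℝ)..y, (exp (-x) - exp (-y) * expPartialSum n (y - x))
      = 1 - exp (-y) * expPartialSum (n + 1) y := by
  have hderiv (x : ℝ) : HasDerivAt (fun x => exp (-y) * expPartialSum (n + 1) (y - x) - exp (-x))
      (exp (-x) - exp (-y) * expPartialSum n (y - x)) x := by
    refine ((((hasDerivAt_expPartialSum_succ n (y - x)).comp x
      ((hasDerivAt_id x).const_sub y)).const_mul _).sub (hasDerivAt_neg x).exp).congr_deriv ?_
    simp; ring
  rw [intervalIntegral.integral_eq_sub_of_hasDerivAt (fun x _ => hderiv x)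
    (by apply Continuous.intervalIntegrable; have := continuous_expPartialSum n; fun_prop)]
  simp [expPartialSum_succ_zero]

lemma exponentialPDF_one_mul_erlangCDF_sub (n : ℕ) (y x : ℝ) :
    exponentialPDF 1 x * ENNReal.ofReal (erlangCDF n (y - x))
      = (Icc 0 y).indicator (fun x => ENNReal.ofReal (exp (-x) * erlangCDF n (y - x))) x := by
  rw [exponentialPDF_eq]
  by_cases hx : 0 ≤ x
  · by_cases hxy : x ≤ y
    · simp [hx, hxy, ENNReal.ofReal_mul (exp_nonneg _)]
    · simp [hx, hxy, erlangCDF, not_le.2 (sub_neg.2 (not_le.1 hxy))]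
  · simp [hx]

lemma lintegral_erlangCDF_sub_expMeasure (n : ℕ) (y : ℝ) :
    ∫⁻ x, ENNReal.ofReal (erlangCDF n (y - x)) ∂expMeasure 1
      = ENNReal.ofReal (erlangCDF (n + 1) y) := by
  rw [show expMeasure 1 = volume.withDensity (exponentialPDF 1) from rfl,
    lintegral_withDensity_eq_lintegral_mul_non_measurable _ (f := exponentialPDF 1)
      (measurable_exponentialPDFReal 1).ennreal_ofReal (.of_forall fun _ => ENNReal.ofReal_lt_top)]
  simp_rw [Pi.mul_apply, exponentialPDF_one_mul_erlangCDF_sub,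
    lintegral_indicator measurableSet_Icc]
  by_cases hy : 0 ≤ y
  · have hcont : Continuous fun x => exp (-x) - exp (-y) * expPartialSum n (y - x) := by
      have := continuous_expPartialSum n; fun_prop
    rw [setLIntegral_congr_fun measurableSet_Icc fun x hx => by
        rw [exp_neg_mul_erlangCDF_sub n hx.2],
      ← ofReal_integral_eq_lintegral_ofReal hcont.integrableOn_Icc, integral_Icc_eq_integral_Ioc,
      ← intervalIntegral.integral_of_le hy, integral_exp_neg_sub_expPartialSum, erlangCDF,
      if_pos hy]
    refine (ae_restrict_iff' measurableSet_Icc).2 (.of_forall fun x hx => ?_)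
    simp only [Pi.zero_apply, ← exp_neg_mul_erlangCDF_sub n hx.2]
    exact mul_nonneg (exp_nonneg _) (erlangCDF_nonneg n _)
  · simp [erlangCDF, hy]

lemma MeasureTheory.Measure.conv_apply {M : Type*} [AddMonoid M] [MeasurableSpace M]
    [MeasurableAdd₂ M] (μ ν : Measure M) [SFinite ν] {s : Set M} (hs : MeasurableSet s) :
    (μ ∗ ν) s = ∫⁻ x, ν ((x + ·) ⁻¹' s) ∂μ := by
  rw [Measure.conv, Measure.map_apply measurable_add hs, Measure.prod_apply (measurable_add hs)]
  rfl

lemma expMeasure_conv_apply_Iic {ν : Measure ℝ} [SFinite ν] {n : ℕ}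
    (hν : ∀ z, ν (Iic z) = ENNReal.ofReal (erlangCDF n z)) (y : ℝ) :
    (expMeasure 1 ∗ ν) (Iic y) = ENNReal.ofReal (erlangCDF (n + 1) y) := by
  simp_rw [Measure.conv_apply _ _ measurableSet_Iic, preimage_const_add_Iic, hν]
  exact lintegral_erlangCDF_sub_expMeasure n y

lemma map_finsetSum_apply_Iic_eq_erlangCDF {Ω ι : Type*} [MeasurableSpace Ω] {P : Measure Ω}
    [IsProbabilityMeasure P] {ψ : ι → Ω → ℝ} (hlaw : ∀ j, HasLaw (ψ j) (expMeasure 1) P)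
    (hindep : iIndepFun ψ P) (s : Finset ι) (y : ℝ) :
    P.map (∑ j ∈ s, ψ j) (Iic y) = ENNReal.ofReal (erlangCDF s.card y) := by
  have : IsProbabilityMeasure (expMeasure 1) := isProbabilityMeasure_expMeasure one_pos
  induction s using Finset.cons_induction generalizing y with
  | empty =>
    rw [Finset.sum_empty, Finset.card_empty, show (0 : Ω → ℝ) = fun _ => 0 from rfl,
      Measure.map_const]
    by_cases hy : 0 ≤ y <;> simp [erlangCDF, expPartialSum, hy]
  | cons i s hi ih =>
    have hsum : HasLaw (∑ j ∈ s, ψ j) (P.map (∑ j ∈ s, ψ j)) P :=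
      ⟨Finset.aemeasurable_sum s fun j _ => (hlaw j).aemeasurable, rfl⟩
    have hindep_i : IndepFun (ψ i) (∑ j ∈ s, ψ j) P :=
      (hindep.indepFun_finsetSum_of_notMem₀ (fun j => (hlaw j).aemeasurable) hi).symm
    rw [Finset.sum_cons, Finset.card_cons, (hindep_i.hasLaw_add (hlaw i) hsum).map_eq]
    exact expMeasure_conv_apply_Iic ih y

lemma sum_log_le_card_mul_log_mean {ι : Type*} (s : Finset ι) {b : ι → ℝ}
    (hb : ∀ j ∈ s, 0 < b j) : ∑ j ∈ s, log (b j) ≤ s.card * log ((∑ j ∈ s, b j) / s.card) := by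
  rcases s.eq_empty_or_nonempty with rfl | hs
  · simp
  have hcard : (0 : ℝ) < s.card := by exact_mod_cast hs.card_pos
  have hjensen := strictConcaveOn_log_Ioi.concaveOn.le_map_sum (t := s) (p := b)
    (w := fun _ => (s.card : ℝ)⁻¹) (fun _ _ => by positivity)
    (by rw [Finset.sum_const, nsmul_eq_mul, mul_inv_cancel₀ hcard.ne']) hb
  simp only [smul_eq_mul, inv_mul_eq_div, ← Finset.sum_div] at hjensen
  rwa [div_le_iff₀' hcard] at hjensen

lemma sum_log_one_add_le {ι : Type*} {s : Finset ι} (hs : s.Nonempty) {a : ι → ℝ}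
    (ha : ∀ j ∈ s, 0 ≤ a j) {x : ℝ} (hx : ∑ j ∈ s, a j ≤ x) :
    ∑ j ∈ s, log (1 + a j) ≤ s.card * log (1 + x / s.card) := by
  have hcard : (0 : ℝ) < s.card := by exact_mod_cast hs.card_pos
  have hmean : (∑ j ∈ s, (1 + a j)) / s.card = 1 + (∑ j ∈ s, a j) / s.card := by
    rw [Finset.sum_add_distrib, Finset.sum_const, nsmul_one]
    field_simp
  calc ∑ j ∈ s, log (1 + a j)
      ≤ s.card * log ((∑ j ∈ s, (1 + a j)) / s.card) :=
        sum_log_le_card_mul_log_mean s fun j hj => by linarith [ha j hj]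
    _ ≤ s.card * log (1 + x / s.card) := by
        have : 0 ≤ ∑ j ∈ s, a j := Finset.sum_nonneg ha
        rw [hmean]
        gcongr

noncomputable def lomaxMeasure (κ : ℝ) : Measure ℝ :=
  volume.withDensity fun t => ENNReal.ofReal (if 0 ≤ t then κ * (1 + t) ^ (-κ - 1) else 0)

lemma ae_nonneg_lomaxMeasure (κ : ℝ) : ∀ᵐ t ∂lomaxMeasure κ, 0 ≤ t := by
  rw [ae_iff, show {t : ℝ | ¬0 ≤ t} = Iio 0 by ext; simp, lomaxMeasure,
    withDensity_apply _ measurableSet_Iio]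
  exact (setLIntegral_congr_fun measurableSet_Iio fun t ht => by
    simp [not_le.2 (mem_Iio.1 ht)]).trans lintegral_zero

lemma lomaxMeasure_Icc_zero {κ : ℝ} (hκ : 0 ≤ κ) {T : ℝ} (hT : 0 ≤ T) :
    lomaxMeasure κ (Icc 0 T) = ENNReal.ofReal (1 - (1 + T) ^ (-κ)) := by
  have hcont : ContinuousOn (fun t : ℝ => κ * (1 + t) ^ (-κ - 1)) (Icc 0 T) :=
    continuousOn_const.mul <| (by fun_prop : Continuous fun t : ℝ => 1 + t).continuousOn.rpow_const
      fun t ht => Or.inl (by linarith [ht.1])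
  have hderiv : ∀ t ∈ uIcc 0 T, HasDerivAt (fun u : ℝ => -(1 + u) ^ (-κ))
      (κ * (1 + t) ^ (-κ - 1)) t := by
    intro t ht
    rw [uIcc_of_le hT] at ht
    refine (((hasDerivAt_id' t).const_add 1).rpow_const (p := -κ)
      (Or.inl (by linarith [ht.1]))).neg.congr_deriv ?_
    ring
  rw [lomaxMeasure, withDensity_apply _ measurableSet_Icc,
    setLIntegral_congr_fun measurableSet_Icc fun t ht => by rw [if_pos ht.1],
    ← ofReal_integral_eq_lintegral_ofReal hcont.integrableOn_Icc, integral_Icc_eq_integral_Ioc,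
    ← intervalIntegral.integral_of_le hT, intervalIntegral.integral_eq_sub_of_hasDerivAt hderiv
      ((uIcc_of_le hT).symm ▸ hcont).intervalIntegrable]
  · simp; ring_nf
  · refine (ae_restrict_iff' measurableSet_Icc).2 (.of_forall fun t ht => ?_)
    have : 0 < 1 + t := by linarith [ht.1]
    positivity

lemma preimage_mul_log_one_add_Iic_inter_Ici {κ : ℝ} (hκ : 0 < κ) (c : ℝ) :
    (fun t => κ * log (1 + t)) ⁻¹' Iic c ∩ Ici 0 = Icc 0 (exp (c / κ) - 1) := by
  ext t
  simp only [mem_inter_iff, mem_preimage, mem_Iic, mem_Ici, mem_Icc]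
  refine and_comm.trans (and_congr_right fun ht => ?_)
  rw [← le_div_iff₀' hκ, log_le_iff_le_exp (by linarith), le_sub_iff_add_le']

lemma hasLaw_mul_log_one_add_lomaxMeasure {κ : ℝ} (hκ : 0 < κ) :
    HasLaw (fun t => κ * log (1 + t)) (expMeasure 1) (lomaxMeasure κ) := by
  have hmeas : Measurable fun t : ℝ => κ * log (1 + t) := by fun_prop
  refine ⟨hmeas.aemeasurable, ?_⟩
  have := isProbabilityMeasure_expMeasure one_pos
  refine (Measure.ext_of_Iic _ _ fun c => ?_).symm
  rw [← ofReal_cdf, cdf_expMeasure_eq one_pos, Measure.map_apply hmeas measurableSet_Iic,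
    ← measure_inter_conull (t := Ici 0) (ae_nonneg_lomaxMeasure κ),
    preimage_mul_log_one_add_Iic_inter_Ici hκ]
  by_cases hc : 0 ≤ c
  · rw [lomaxMeasure_Icc_zero hκ.le (by linarith [one_le_exp (div_nonneg hc hκ.le)]),
      add_sub_cancel, ← exp_mul, if_pos hc]
    field_simp
  · have : exp (c / κ) < 1 := exp_lt_one_iff.2 (div_neg_of_neg_of_pos (not_le.1 hc) hκ)
    rw [Icc_eq_empty (by linarith), if_neg hc, measure_empty, ENNReal.ofReal_zero]

/-- **Upper bound on the CDF of a sum of Lomax variables (Theorem 3, eqs. (24)–(25)).**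
If `φ₁, …, φ_M` are independent Lomax(shape `κ`, scale `1`) random variables (density
`κ (1+t)^(-κ-1)` on `[0,∞)`), then for `x ≥ 0`,
`ℙ[∑ⱼ φⱼ < x] ≤ 1 - Γ(M, Mκ ln(1 + x/M))/(M-1)!`. -/
theorem lomax_sum_cdf_upper_bound {Ω : Type*} [MeasurableSpace Ω] (P : Measure Ω)
    [IsProbabilityMeasure P]
    (κ : ℝ) (hκ : 0 < κ) (M : ℕ) (hM : 1 ≤ M) (φ : Fin M → Ω → ℝ)
    (hmeas : ∀ j, Measurable (φ j))
    (hindep : iIndepFun φ P)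
    (hlomax : ∀ j, Measure.map (φ j) P
      = volume.withDensity fun t => ENNReal.ofReal
          (if 0 ≤ t then κ * (1 + t) ^ (-κ - 1) else 0))
    (x : ℝ) (hx : 0 ≤ x) :
    (P {ω | ∑ j : Fin M, φ j ω < x}).toReal
      ≤ 1 - (1 / (M - 1).factorial)
          * ∫ t in Set.Ici (M * κ * Real.log (1 + x / M)), t ^ (M - 1) * Real.exp (-t) := by
  set y := M * κ * log (1 + x / M)
  have hy : 0 ≤ y := by
    have := log_nonneg (le_add_of_nonneg_right (by positivity : 0 ≤ x / M))
    positivity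
  have hφ (j : Fin M) : HasLaw (φ j) (lomaxMeasure κ) P := ⟨(hmeas j).aemeasurable, hlomax j⟩
  set ψ : Fin M → Ω → ℝ := fun j ω => κ * log (1 + φ j ω)
  have hψ (j : Fin M) : HasLaw (ψ j) (expMeasure 1) P :=
    (hasLaw_mul_log_one_add_lomaxMeasure hκ).comp (hφ j)
  have hψindep : iIndepFun ψ P := hindep.comp (fun _ t => κ * log (1 + t)) fun _ => by fun_prop
  have hcdf : P ((∑ j, ψ j) ⁻¹' Iic y) = ENNReal.ofReal (erlangCDF M y) := by
    rw [← Measure.map_apply (by fun_prop) measurableSet_Iic,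
      map_finsetSum_apply_Iic_eq_erlangCDF hψ hψindep, Finset.card_univ, Fintype.card_fin]
  have hevent : {ω | ∑ j, φ j ω < x} ≤ᵐ[P] (∑ j, ψ j) ⁻¹' Iic y := by
    filter_upwards [ae_all_iff.2 fun j =>
      ae_of_ae_map (hφ j).aemeasurable ((hφ j).map_eq ▸ ae_nonneg_lomaxMeasure κ)] with ω hω hlt
    have : Nonempty (Fin M) := ⟨⟨0, hM⟩⟩
    have hamgm := sum_log_one_add_le Finset.univ_nonempty (fun j _ => hω j) (le_of_lt hlt)
    rw [Finset.card_univ, Fintype.card_fin] at hamgm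
    change (∑ j, ψ j) ω ≤ y
    simp only [Finset.sum_apply, ψ, ← Finset.mul_sum]
    exact (mul_le_mul_of_nonneg_left hamgm hκ.le).trans_eq (by ring)
  calc (P {ω | ∑ j, φ j ω < x}).toReal
      ≤ (P ((∑ j, ψ j) ⁻¹' Iic y)).toReal :=
        ENNReal.toReal_mono (measure_ne_top _ _) (measure_mono_ae hevent)
    _ = erlangCDF M y := by rw [hcdf, ENNReal.toReal_ofReal (erlangCDF_nonneg M y)]
    _ = _ := erlangCDF_eq_one_sub_integral_Ici hM hy
end

section
/- For every integer n ≥ 1 and every real x ≥ 0, (1 − exp(−(n!)^{−1/n} x))^{n} ≤ 1 − (1/(n−1)!) ∫_{x}^{∞} t^{n−1} e^{−t} dt. -/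
/-!
Write `n = m + 1`, `α = (n!)^(-1/n)` and `D(y) = ∫₀ʸ tᵐ e⁻ᵗ dt - m! (1 - e^(-αy))ⁿ`, so the
claim is `D(x) ≥ 0`. Both terms of `D` tend to `m!`, hence `D(0) = D(∞) = 0`. The normalisation
`αⁿ n! = 1` gives `αᵐ e^(αy) D'(y) = (α y e^(-γy))ᵐ - (1 - e^(-αy))ᵐ` with `m γ = 1 - α`, so `D'`
has the sign of `ψ(y) = α y e^(-γy) - (1 - e^(-αy))`. Since `ψ(0) = 0` and
`ψ'(y) = -α e^(-γy) r(y)` with `r(y) = e^((γ-α)y) + γy - 1` convex and `r(0) = 0`, once `ψ` becomes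
nonpositive it stays so. Thus `D` increases and then decreases, and it cannot drop below its boundary values `0`.
-/

open Real MeasureTheory Set Filter Topology
open scoped Nat

lemma antitoneOn_Ici_of_deriv_nonpos_persists {f f' : ℝ → ℝ} (hf : ∀ y, HasDerivAt f (f' y) y)
    (hf0 : f 0 = 0) (hf' : ∀ c, 0 < c → f' c ≤ 0 → ∀ y, c ≤ y → f' y ≤ 0)
    {u : ℝ} (hu : 0 < u) (hfu : f u ≤ 0) : AntitoneOn f (Ici u) := by
  have hcont : Continuous f := continuous_iff_continuousAt.2 fun y => (hf y).continuousAt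
  obtain ⟨c, hc, hslope⟩ :=
    exists_hasDerivAt_eq_slope f f' hu hcont.continuousOn fun y _ => hf y
  have hc' : f' c ≤ 0 := by
    rw [hslope, hf0, sub_zero, sub_zero]
    exact div_nonpos_of_nonpos_of_nonneg hfu hu.le
  refine (antitoneOn_of_hasDerivWithinAt_nonpos (convex_Ici c) hcont.continuousOn
    (fun y _ => (hf y).hasDerivWithinAt) fun y hy => hf' c hc.1 hc' y ?_).mono
    (Ici_subset_Ici.2 hc.2.le)
  rw [interior_Ici] at hy
  exact hy.le

lemma exp_mul_add_mul_sub_one_nonneg_of_le {δ γ c y : ℝ} (hc : 0 < c) (hcy : c ≤ y)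
    (h : 0 ≤ exp (δ * c) + γ * c - 1) : 0 ≤ exp (δ * y) + γ * y - 1 := by
  have hconv : ConvexOn ℝ univ fun z : ℝ => exp (δ * z) + γ * z - 1 := by
    have := ((convexOn_exp.comp_linearMap (LinearMap.lsmul ℝ ℝ δ)).add
      ((LinearMap.lsmul ℝ ℝ γ).convexOn convex_univ)).add_const (-1)
    refine this.congr fun z _ => ?_
    simp [sub_eq_add_neg]
  refine h.trans (hconv.le_right_of_left_le'' (mem_univ 0) (mem_univ y) hc hcy ?_)
  simpa using h

lemma hasDerivAt_mul_exp_sub_one_sub_exp (α γ z : ℝ) :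
    HasDerivAt (fun z => α * z * exp (-(γ * z)) - (1 - exp (-(α * z))))
      (-(α * exp (-(γ * z)) * (exp ((γ - α) * z) + γ * z - 1))) z := by
  have hlin (a : ℝ) : HasDerivAt (fun z : ℝ => -(a * z)) (-a) z := by
    simpa using ((hasDerivAt_id z).const_mul a).fun_neg
  have hαz : HasDerivAt (fun z : ℝ => α * z) α z := by
    simpa using (hasDerivAt_id z).const_mul α
  refine ((hαz.fun_mul (hlin γ).exp).fun_sub ((hlin α).exp.const_sub 1)).congr_deriv ?_
  have he : exp (-(γ * z)) * exp ((γ - α) * z) = exp (-(α * z)) := by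
    rw [← exp_add]; ring_nf
  linear_combination α * he

lemma mul_exp_le_one_sub_exp_of_le {α γ c y : ℝ} (hα : 0 < α) (hc : 0 < c) (hcy : c ≤ y)
    (h : α * c * exp (-(γ * c)) ≤ 1 - exp (-(α * c))) :
    α * y * exp (-(γ * y)) ≤ 1 - exp (-(α * y)) := by
  have hψ' : ∀ c, 0 < c → -(α * exp (-(γ * c)) * (exp ((γ - α) * c) + γ * c - 1)) ≤ 0 →
      ∀ y, c ≤ y → -(α * exp (-(γ * y)) * (exp ((γ - α) * y) + γ * y - 1)) ≤ 0 := by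
    intro c hc hc' y hcy
    have hr := exp_mul_add_mul_sub_one_nonneg_of_le hc hcy
      (nonneg_of_mul_nonneg_right (neg_nonpos.1 hc') (by positivity))
    exact neg_nonpos.2 (mul_nonneg (by positivity) hr)
  have hanti := antitoneOn_Ici_of_deriv_nonpos_persists (hasDerivAt_mul_exp_sub_one_sub_exp α γ)
    (by simp) hψ' hc (sub_nonpos.2 h)
  exact sub_nonpos.1 ((hanti self_mem_Ici hcy hcy).trans (sub_nonpos.2 h))

lemma integrableOn_pow_mul_exp_neg_Ioi (m : ℕ) :
    IntegrableOn (fun t : ℝ => t ^ m * exp (-t)) (Ioi 0) := by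
  refine (GammaIntegral_convergent (s := m + 1) (by positivity)).congr_fun (fun t _ => ?_)
    measurableSet_Ioi
  dsimp only
  rw [add_sub_cancel_right, rpow_natCast, mul_comm]

lemma integral_pow_mul_exp_neg_Ioi (m : ℕ) : ∫ t in Ioi (0 : ℝ), t ^ m * exp (-t) = m ! := by
  rw [← Gamma_nat_eq_factorial, Gamma_eq_integral (by positivity)]
  refine setIntegral_congr_fun measurableSet_Ioi fun t _ => ?_
  rw [add_sub_cancel_right, rpow_natCast, mul_comm]

lemma rpow_neg_one_div_pow_mul_self {a : ℝ} (ha : 0 < a) {n : ℕ} (hn : n ≠ 0) :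
    (a ^ (-(1 / (n : ℝ)))) ^ n * a = 1 := by
  rw [rpow_neg ha.le, inv_pow, one_div, rpow_inv_natCast_pow ha.le hn, inv_mul_cancel₀ ha.ne']

section GammaBoundGap

variable (m : ℕ) (α : ℝ)

noncomputable def gammaBoundGap (y : ℝ) : ℝ :=
  (∫ t in (0 : ℝ)..y, t ^ m * exp (-t)) - m ! * (1 - exp (-(α * y))) ^ (m + 1)

noncomputable def gammaBoundGapDeriv (y : ℝ) : ℝ :=
  y ^ m * exp (-y) - exp (-(α * y)) * (1 - exp (-(α * y))) ^ m / α ^ m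

variable {m α}

lemma hasDerivAt_gammaBoundGap (hnorm : α ^ (m + 1) * (m + 1)! = 1) (y : ℝ) :
    HasDerivAt (gammaBoundGap m α) (gammaBoundGapDeriv m α y) y := by
  have hcont : Continuous fun t : ℝ => t ^ m * exp (-t) := by fun_prop
  have hF := intervalIntegral.integral_hasDerivAt_right (hcont.intervalIntegrable 0 y)
    (hcont.stronglyMeasurableAtFilter _ _) hcont.continuousAt
  have hQ : HasDerivAt (fun y => 1 - exp (-(α * y))) (exp (-(α * y)) * α) y := by
    simpa using (((hasDerivAt_id y).const_mul α).fun_neg.exp.const_sub 1)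
  refine (hF.fun_sub ((hQ.pow (m + 1)).const_mul (m ! : ℝ))).congr_deriv ?_
  have hinv : (m + 1)! * α = (α ^ m)⁻¹ :=
    eq_inv_of_mul_eq_one_left (by linear_combination hnorm)
  rw [gammaBoundGapDeriv, div_eq_mul_inv, ← hinv, Nat.add_sub_cancel]
  push_cast [Nat.factorial_succ]
  ring

lemma tendsto_gammaBoundGap_atTop (hα : 0 < α) : Tendsto (gammaBoundGap m α) atTop (𝓝 0) := by
  have hF := intervalIntegral_tendsto_integral_Ioi 0 (integrableOn_pow_mul_exp_neg_Ioi m)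
    tendsto_id
  rw [integral_pow_mul_exp_neg_Ioi] at hF
  have hE : Tendsto (fun y => exp (-(α * y))) atTop (𝓝 0) :=
    tendsto_exp_atBot.comp (tendsto_neg_atTop_atBot.comp (tendsto_id.const_mul_atTop hα))
  have hG := ((tendsto_const_nhds (x := (1 : ℝ))).sub hE).pow (m + 1) |>.const_mul (m ! : ℝ)
  unfold gammaBoundGap
  simpa using hF.sub hG

lemma gammaBoundGapDeriv_nonpos_iff (hm : m ≠ 0) (hα : 0 < α) {γ z : ℝ} (hγ : m * γ = 1 - α)
    (hz : 0 ≤ z) :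
    gammaBoundGapDeriv m α z ≤ 0 ↔ α * z * exp (-(γ * z)) ≤ 1 - exp (-(α * z)) := by
  have hpow : (α * z * exp (-(γ * z))) ^ m = α ^ m * z ^ m * exp (-z + α * z) := by
    rw [mul_pow, mul_pow, ← exp_nat_mul]
    congr 2
    linear_combination (-z) * hγ
  have hexp : exp (-(α * z)) * exp (-z + α * z) = exp (-z) := by
    rw [← exp_add]; ring_nf
  have hfac : 0 < exp (-(α * z)) / α ^ m := by positivity
  have hid : exp (-(α * z)) / α ^ m *
      ((1 - exp (-(α * z))) ^ m - (α * z * exp (-(γ * z))) ^ m) = -gammaBoundGapDeriv m α z := by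
    rw [hpow, gammaBoundGapDeriv, ← hexp]
    field_simp
    ring
  have hQ : 0 ≤ 1 - exp (-(α * z)) := sub_nonneg.2 (exp_le_one_iff.2 (by nlinarith))
  rw [← neg_nonneg, ← hid, mul_nonneg_iff_of_pos_left hfac, sub_nonneg,
    pow_le_pow_iff_left₀ (by positivity) hQ hm]

lemma gammaBoundGapDeriv_nonpos_persists (hα : 0 < α) (hnorm : α ^ (m + 1) * (m + 1)! = 1)
    (c : ℝ) (hc : 0 < c) (hdc : gammaBoundGapDeriv m α c ≤ 0) (y : ℝ) (hcy : c ≤ y) :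
    gammaBoundGapDeriv m α y ≤ 0 := by
  rcases Nat.eq_zero_or_pos m with rfl | hm
  · obtain rfl : α = 1 := by simpa using hnorm
    simp [gammaBoundGapDeriv]
  have hγ : (m : ℝ) * ((1 - α) / m) = 1 - α := mul_div_cancel₀ _ (by positivity)
  rw [gammaBoundGapDeriv_nonpos_iff hm.ne' hα hγ (hc.le.trans hcy)]
  exact mul_exp_le_one_sub_exp_of_le hα hc hcy
    ((gammaBoundGapDeriv_nonpos_iff hm.ne' hα hγ hc.le).1 hdc)

lemma gammaBoundGap_nonneg (hα : 0 < α) (hnorm : α ^ (m + 1) * (m + 1)! = 1) {x : ℝ}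
    (hx : 0 ≤ x) : 0 ≤ gammaBoundGap m α x := by
  by_contra! hneg
  have hgap0 : gammaBoundGap m α 0 = 0 := by simp [gammaBoundGap]
  have hxpos : 0 < x := hx.lt_of_ne (by rintro rfl; exact hneg.ne hgap0)
  have hanti := antitoneOn_Ici_of_deriv_nonpos_persists (hasDerivAt_gammaBoundGap hnorm) hgap0
    (gammaBoundGapDeriv_nonpos_persists hα hnorm) hxpos hneg.le
  have hlim := le_of_tendsto (tendsto_gammaBoundGap_atTop hα)
    (eventually_ge_atTop x |>.mono fun y hy => hanti self_mem_Ici hy hy)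
  exact hneg.not_ge hlim

end GammaBoundGap

/-- **Incomplete gamma lower bound (DLMF 8.10.11; eq. (20) of the paper).** For `n ≥ 1`
and `x ≥ 0`, `(1 - exp(-(n!)^(-1/n) x))^n ≤ 1 - Γ(n,x)/(n-1)!` where
`Γ(n, x) = ∫_x^∞ t^(n-1) e^(-t) dt`. -/
theorem regularized_gamma_lower_bound (n : ℕ) (hn : 1 ≤ n) (x : ℝ) (hx : 0 ≤ x) :
    (1 - Real.exp (-((n.factorial : ℝ) ^ (-(1 / (n : ℝ))) * x))) ^ n
      ≤ 1 - (1 / (n - 1).factorial)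
          * ∫ t in Set.Ici x, t ^ (n - 1) * Real.exp (-t) := by
  obtain ⟨m, rfl⟩ := Nat.exists_eq_add_of_le' hn
  rw [Nat.add_sub_cancel]
  have hfac : (0 : ℝ) < (m + 1)! := by positivity
  have hgap := gammaBoundGap_nonneg (rpow_pos_of_pos hfac _)
    (rpow_neg_one_div_pow_mul_self hfac m.succ_ne_zero) hx
  have htail :
      ∫ t in Ioi x, t ^ m * exp (-t) = (m ! : ℝ) - ∫ t in (0 : ℝ)..x, t ^ m * exp (-t) := by
    rw [← integral_pow_mul_exp_neg_Ioi m, ← intervalIntegral.integral_interval_add_Ioi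
      (integrableOn_pow_mul_exp_neg_Ioi m)
      ((integrableOn_pow_mul_exp_neg_Ioi m).mono_set (Ioi_subset_Ioi hx))]
    ring
  rw [gammaBoundGap] at hgap
  rw [integral_Ici_eq_integral_Ioi, htail, one_div_mul_eq_div, one_sub_div (by positivity),
    sub_sub_cancel, le_div_iff₀ (by positivity)]
  linarith
end

section
/- Let ω > 0, η > 0 and C > 0 be real constants. Then the function g : ℝ → ℝ defined by g(x) = ln( ln(ω e^{x} + 1) ) − ln( e^{x}/η + C ) is strictly concave on ℝ. -/
/-!
Writing `g = log L₁ - log L₂` with `L₁ x = log (ω eˣ + 1)` and `L₂ x = eˣ / η + C`, the second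
derivative of `log ∘ L` is `(L L'' - L'²) / L²`. For `L₂` the numerator is `C eˣ / η ≥ 0`, so
`log ∘ L₂` is convex; for `L₁`, with `u = ω eˣ`, it is `u (log (1 + u) - u) / (1 + u)² < 0`
because `log (1 + u) < u`, so `log ∘ L₁` is strictly concave.
-/

open Real Set

lemma strictConcaveOn_univ_of_hasDerivAt2_neg {f f' f'' : ℝ → ℝ}
    (hf : ∀ x, HasDerivAt f (f' x) x) (hf' : ∀ x, HasDerivAt f' (f'' x) x)
    (hf''₀ : ∀ x, f'' x < 0) : StrictConcaveOn ℝ univ f := by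
  have hderiv : deriv f = f' := funext fun x => (hf x).deriv
  refine strictConcaveOn_univ_of_deriv2_neg
    (continuous_iff_continuousAt.2 fun x => (hf x).continuousAt) fun x => ?_
  simpa [hderiv, (hf' x).deriv] using hf''₀ x

section LogComp

variable {L L' L'' : ℝ → ℝ}

lemma hasDerivAt_div_of_hasDerivAt2 {x : ℝ} (hL : HasDerivAt L (L' x) x)
    (hL' : HasDerivAt L' (L'' x) x) (h₀ : L x ≠ 0) :
    HasDerivAt (fun y => L' y / L y) ((L x * L'' x - L' x ^ 2) / L x ^ 2) x :=
  (hL'.fun_div hL h₀).congr_deriv (by ring)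

lemma strictConcaveOn_log_of_mul_lt_sq (hL : ∀ x, HasDerivAt L (L' x) x)
    (hL' : ∀ x, HasDerivAt L' (L'' x) x) (h₀ : ∀ x, L x ≠ 0)
    (h : ∀ x, L x * L'' x < L' x ^ 2) : StrictConcaveOn ℝ univ fun x => log (L x) :=
  strictConcaveOn_univ_of_hasDerivAt2_neg (fun x => (hL x).log (h₀ x))
    (fun x => hasDerivAt_div_of_hasDerivAt2 (hL x) (hL' x) (h₀ x))
    fun x => div_neg_of_neg_of_pos (sub_neg.2 (h x)) (by have := h₀ x; positivity)

lemma convexOn_log_of_sq_le_mul (hL : ∀ x, HasDerivAt L (L' x) x)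
    (hL' : ∀ x, HasDerivAt L' (L'' x) x) (h₀ : ∀ x, L x ≠ 0)
    (h : ∀ x, L' x ^ 2 ≤ L x * L'' x) : ConvexOn ℝ univ fun x => log (L x) :=
  convexOn_of_hasDerivWithinAt2_nonneg convex_univ
    (fun x _ => ((hL x).log (h₀ x)).continuousAt.continuousWithinAt)
    (fun x _ => ((hL x).log (h₀ x)).hasDerivWithinAt)
    (fun x _ => (hasDerivAt_div_of_hasDerivAt2 (hL x) (hL' x) (h₀ x)).hasDerivWithinAt)
    fun x _ => div_nonneg (sub_nonneg.2 (h x)) (sq_nonneg _)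

end LogComp

lemma strictConcaveOn_log_log_mul_exp_add_one {ω : ℝ} (hω : 0 < ω) :
    StrictConcaveOn ℝ univ fun x => log (log (ω * exp x + 1)) := by
  have hu : ∀ x, HasDerivAt (fun x => ω * exp x) (ω * exp x) x :=
    fun x => (hasDerivAt_exp x).const_mul ω
  have hu₀ : ∀ x, 0 < ω * exp x := fun x => by positivity
  refine strictConcaveOn_log_of_mul_lt_sq (L' := fun x => ω * exp x / (ω * exp x + 1))
    (L'' := fun x => ω * exp x / (ω * exp x + 1) ^ 2)
    (fun x => ((hu x).add_const 1).log (by linarith [hu₀ x]))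
    (fun x => ((hu x).fun_div ((hu x).add_const 1) (by linarith [hu₀ x])).congr_deriv (by ring))
    (fun x => (log_pos (by linarith [hu₀ x])).ne') fun x => ?_
  have hlog : log (ω * exp x + 1) < ω * exp x :=
    (log_lt_iff_lt_exp (by linarith [hu₀ x])).2 (add_one_lt_exp (hu₀ x).ne')
  calc log (ω * exp x + 1) * (ω * exp x / (ω * exp x + 1) ^ 2)
      < ω * exp x * (ω * exp x / (ω * exp x + 1) ^ 2) := by gcongr
    _ = (ω * exp x / (ω * exp x + 1)) ^ 2 := by rw [div_pow, sq (ω * exp x), ← mul_div_assoc]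

lemma convexOn_log_exp_div_add {η C : ℝ} (hη : 0 < η) (hC : 0 ≤ C) :
    ConvexOn ℝ univ fun x => log (exp x / η + C) := by
  refine convexOn_log_of_sq_le_mul (L'' := fun x => exp x / η)
    (fun x => ((hasDerivAt_exp x).div_const η).add_const C)
    (fun x => (hasDerivAt_exp x).div_const η) (fun x => by positivity) fun x => ?_
  have : 0 ≤ C * (exp x / η) := by positivity
  nlinarith

/-- **Strict concavity of the log energy efficiency (proof of Theorem 2, eq. (32)).**
For `ω, η, C > 0`, the function `x ↦ ln(ln(ω e^x + 1)) - ln(e^x/η + C)` is strictly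
concave on `ℝ`. -/
theorem log_energy_efficiency_strictConcave (ω η C : ℝ) (hω : 0 < ω) (hη : 0 < η)
    (hC : 0 < C) :
    StrictConcaveOn ℝ Set.univ
      (fun x : ℝ => Real.log (Real.log (ω * Real.exp x + 1))
        - Real.log (Real.exp x / η + C)) :=
  (strictConcaveOn_log_log_mul_exp_add_one hω).sub_convexOn (convexOn_log_exp_div_add hη hC.le)
end

section
/- Let ω > 0, η > 0 and C > 0 be real constants, define g : ℝ → ℝ by g(x) = ln( ln(ω e^{x} + 1) ) − ln( e^{x}/η + C ), and let t > 0 be a real number satisfying ω (t + η C) = (1 + ω t) ln(1 + ω t). Then g attains its global maximum over ℝ at x* = ln t, i.e. g(x) ≤ g(ln t) for all x ∈ ℝ. -/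
/-! The numerator `ln (ω p + 1)` is concave in `p` and the denominator `p / η + C` is affine, so
the ratio `ln (ω p + 1) / (p / η + C)` lies below the value at any point `t` where the tangent
line of the numerator is proportional to the denominator; the stationarity equation says exactly
that this happens at `p = t`. Taking logarithms gives the claim for `g (x) = ln (ratio at e^x)`. -/

open Real

lemma Real.log_le_log_add_sub_div {x y : ℝ} (hx : 0 < x) (hy : 0 < y) :
    log y ≤ log x + (y - x) / x := by
  have h := log_le_sub_one_of_pos (div_pos hy hx)
  rw [log_div hy.ne' hx.ne'] at h
  have hslope : (y - x) / x = y / x - 1 := by field_simp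
  linarith

lemma log_mul_add_one_le_tangent {ω t u : ℝ} (ht : 0 < ω * t + 1) (hu : 0 < ω * u + 1) :
    log (ω * u + 1) ≤ log (ω * t + 1) + ω / (ω * t + 1) * (u - t) := by
  convert log_le_log_add_sub_div ht hu using 2
  field_simp
  ring

lemma div_le_div_of_le_tangent {f d : ℝ → ℝ} {t u f' k : ℝ} (hdt : 0 < d t) (hdu : 0 < d u)
    (htan : f u ≤ f t + f' * (u - t)) (hd : d u = d t + k * (u - t))
    (hstat : f' * d t = k * f t) : f u / d u ≤ f t / d t := by
  rw [div_le_div_iff₀ hdu hdt]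
  calc f u * d t ≤ (f t + f' * (u - t)) * d t := mul_le_mul_of_nonneg_right htan hdt.le
    _ = f t * d u := by rw [hd]; linear_combination (u - t) * hstat

/-- **Global optimality of the stationary point (Theorem 2).** For `ω, η, C > 0`, if `t > 0`
satisfies `ω (t + η C) = (1 + ω t) ln(1 + ω t)`, then `g x = ln(ln(ω e^x + 1)) - ln(e^x/η + C)`
attains its global maximum over `ℝ` at `x* = ln t`. -/
theorem log_energy_efficiency_max_at_stationary (ω η C : ℝ) (hω : 0 < ω) (hη : 0 < η)
    (hC : 0 < C) (t : ℝ) (ht : 0 < t)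
    (hstat : ω * (t + η * C) = (1 + ω * t) * Real.log (1 + ω * t)) :
    ∀ x : ℝ,
      Real.log (Real.log (ω * Real.exp x + 1)) - Real.log (Real.exp x / η + C)
        ≤ Real.log (Real.log (ω * Real.exp (Real.log t) + 1))
          - Real.log (Real.exp (Real.log t) / η + C) := by
  intro x
  rw [add_comm 1 (ω * t)] at hstat
  rw [exp_log ht]
  set u := exp x
  have hu : 0 < u := exp_pos x
  have hlog_pos : ∀ {v : ℝ}, 0 < v → 0 < log (ω * v + 1) := fun hv =>
    log_pos (lt_add_of_pos_left 1 (by positivity))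
  have hdu : 0 < u / η + C := by positivity
  have hdt : 0 < t / η + C := by positivity
  have hratio : log (ω * u + 1) / (u / η + C) ≤ log (ω * t + 1) / (t / η + C) :=
    div_le_div_of_le_tangent (f := fun v => log (ω * v + 1)) (d := fun v => v / η + C)
      (f' := ω / (ω * t + 1)) (k := η⁻¹) hdt hdu
      (log_mul_add_one_le_tangent (by positivity) (by positivity)) (by ring)
      (by field_simp; linear_combination hstat)
  rw [← log_div (hlog_pos hu).ne' hdu.ne', ← log_div (hlog_pos ht).ne' hdt.ne']
  exact log_le_log (div_pos (hlog_pos hu) hdu) hratio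
end

section
/- Let M ≥ 2 and κ ≥ 1 be integers and let z be a real number with 0 < z < 1 − (M!)^{−κ/M}. Then (M!)^{1/M} · (−ln(1 − z)) > κ ((1 − z)^{−1/κ} − 1). -/
/-! With `c = (M!)^(1/M)` and `t = (1 - z)^(-1/κ)`, the hypothesis on `z` says `1 < t < c`, and
`-ln(1 - z) = κ ln t`, so the claim becomes `t - 1 < c ln t`. This follows from
`ln t ≥ 1 - 1/t`, since `c (1 - 1/t) > t (1 - 1/t) = t - 1`. -/

namespace Real

lemma sub_one_lt_mul_log {t c : ℝ} (ht : 1 < t) (htc : t < c) : t - 1 < c * log t :=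
  calc t - 1 = t * (1 - t⁻¹) := by field_simp
    _ < c * (1 - t⁻¹) := by
      gcongr
      simpa using inv_lt_one_of_one_lt₀ ht
    _ ≤ c * log t := by
      gcongr
      · linarith
      · exact one_sub_inv_le_log_of_pos (by linarith)

lemma mul_rpow_neg_inv_sub_one_lt_mul_neg_log {x c p : ℝ} (hp : 0 < p) (hc : 0 < c)
    (hcx : c ^ (-p) < x) (hx : x < 1) : p * (x ^ (-1 / p) - 1) < c * -log x := by
  have hx0 : 0 < x := (rpow_pos_of_pos hc _).trans hcx
  have hexp : -1 / p < 0 := by rw [neg_div]; exact neg_neg_of_pos (by positivity)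
  have ht : 1 < x ^ (-1 / p) := one_lt_rpow_of_pos_of_lt_one_of_neg hx0 hx hexp
  have htc : x ^ (-1 / p) < c :=
    calc x ^ (-1 / p) < (c ^ (-p)) ^ (-1 / p) := rpow_lt_rpow_of_neg (by positivity) hcx hexp
      _ = c := by rw [← rpow_mul hc.le, show -p * (-1 / p) = 1 by field_simp, rpow_one]
  have hlog : -log x = p * log (x ^ (-1 / p)) := by rw [log_rpow hx0]; field_simp
  rw [hlog, mul_left_comm]
  exact mul_lt_mul_of_pos_left (sub_one_lt_mul_log ht htc) hp

end Real

theorem omega_mrc_gt_omega_sc_general (M κ : ℕ) (hκ : 1 ≤ κ) (z : ℝ)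
    (hz0 : 0 < z)
    (hz1 : z < 1 - (M.factorial : ℝ) ^ (-(κ : ℝ) / (M : ℝ))) :
    (M.factorial : ℝ) ^ ((1 : ℝ) / (M : ℝ)) * (-Real.log (1 - z))
      > (κ : ℝ) * ((1 - z) ^ (-(1 : ℝ) / (κ : ℝ)) - 1) := by
  have hfac : (0 : ℝ) < M.factorial := by positivity
  have hroot : ((M.factorial : ℝ) ^ ((1 : ℝ) / M)) ^ (-(κ : ℝ)) =
      (M.factorial : ℝ) ^ (-(κ : ℝ) / M) := by
    rw [← Real.rpow_mul hfac.le]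
    ring_nf
  refine Real.mul_rpow_neg_inv_sub_one_lt_mul_neg_log (by exact_mod_cast hκ) (by positivity) ?_
    (by linarith)
  rw [hroot]
  linarith

/-- **Strict inequality `ω_mrc > ω_sc` (core of Lemma 6).** For integers `M ≥ 2`, `κ ≥ 1`
and `0 < z < 1 - (M!)^(-κ/M)`,
`(M!)^(1/M) · (-ln(1-z)) > κ ((1-z)^(-1/κ) - 1)`. -/
theorem omega_mrc_gt_omega_sc (M κ : ℕ) (hM : 2 ≤ M) (hκ : 1 ≤ κ) (z : ℝ)
    (hz0 : 0 < z)
    (hz1 : z < 1 - (M.factorial : ℝ) ^ (-(κ : ℝ) / (M : ℝ))) :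
    (M.factorial : ℝ) ^ ((1 : ℝ) / (M : ℝ)) * (-Real.log (1 - z))
      > (κ : ℝ) * ((1 - z) ^ (-(1 : ℝ) / (κ : ℝ)) - 1) :=
  omega_mrc_gt_omega_sc_general M κ hκ z hz0 hz1
end

section
/- Let M ≥ 1 and κ ≥ 1 be integers and δ > 0 a real constant. Then the ratio R(ε) = ( δ (M!)^{1/M} (−ln(1 − ε^{1/M})) ) / ( κ δ ((1 − ε^{1/M})^{−1/κ} − 1) ) tends to (M!)^{1/M} as ε tends to 0 from the right; i.e., the limit of R(ε) along the filter of positive reals approaching 0 equals (M!)^{1/M}. -/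
open Filter Topology

/-!
With `u = 1 - ε ^ (1 / M)`, which tends to `1` from below as `ε → 0⁺`, the factors `δ` cancel and
the ratio is `(M!) ^ (1 / M)` times `-log u / (κ (u ^ (-1 / κ) - 1))`. Numerator and denominator
both vanish at `u = 1` with the same derivative `-1` there, so this quotient tends to `1`.
-/

theorem HasDerivAt.tendsto_div_nhdsNE {𝕜 : Type*} [NontriviallyNormedField 𝕜] {f g : 𝕜 → 𝕜}
    {f' g' x : 𝕜} (hf : HasDerivAt f f' x) (hg : HasDerivAt g g' x) (hfx : f x = 0)
    (hgx : g x = 0) (hg' : g' ≠ 0) :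
    Tendsto (fun t => f t / g t) (𝓝[≠] x) (𝓝 (f' / g')) := by
  refine ((hasDerivAt_iff_tendsto_slope.mp hf).div (hasDerivAt_iff_tendsto_slope.mp hg)
    hg').congr' ?_
  filter_upwards [self_mem_nhdsWithin] with t ht
  have ht' : t - x ≠ 0 := sub_ne_zero.mpr ht
  simp only [Pi.div_apply, slope_def_field, hfx, hgx, sub_zero]
  exact div_div_div_cancel_right₀ ht' _ _

theorem tendsto_neg_log_div_mul_rpow_neg_inv_sub_one {κ : ℝ} (hκ : κ ≠ 0) :
    Tendsto (fun t => -Real.log t / (κ * (t ^ (-1 / κ) - 1))) (𝓝[≠] 1) (𝓝 1) := by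
  have hlog : HasDerivAt (fun t => -Real.log t) (-1) 1 := by
    have := (Real.hasDerivAt_log (one_ne_zero (α := ℝ))).neg
    rwa [inv_one] at this
  have hrpow : HasDerivAt (fun t => κ * (t ^ (-1 / κ) - 1)) (-1) 1 := by
    have := ((Real.hasDerivAt_rpow_const (p := -1 / κ) (Or.inl one_ne_zero)).sub_const 1).const_mul
      κ
    rwa [Real.one_rpow, mul_one, mul_div_cancel₀ _ hκ] at this
  simpa using hlog.tendsto_div_nhdsNE hrpow (by simp) (by simp) (by norm_num)

theorem tendsto_one_sub_rpow_nhdsGT_zero {p : ℝ} (hp : 0 < p) :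
    Tendsto (fun ε : ℝ => 1 - ε ^ p) (𝓝[>] 0) (𝓝[≠] 1) := by
  have hrpow : Tendsto (fun ε : ℝ => ε ^ p) (𝓝[>] 0) (𝓝 0) := by
    simpa [Real.zero_rpow hp.ne'] using
      (Real.continuousAt_rpow_const 0 p (Or.inr hp.le)).tendsto.mono_left nhdsWithin_le_nhds
  refine tendsto_nhdsWithin_of_tendsto_nhds_of_eventually_within _
    (by simpa using hrpow.const_sub 1) ?_
  filter_upwards [self_mem_nhdsWithin] with ε hε
  simpa using (Real.rpow_pos_of_pos hε p).ne'

/-- **Asymptotic ultra-reliability gap (eq. (41)).** For `M ≥ 1`, `κ ≥ 1` and `δ > 0`, the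
ratio `ω_mrc/ω_sc = (δ (M!)^(1/M) (-ln(1 - ε^(1/M)))) / (κ δ ((1 - ε^(1/M))^(-1/κ) - 1))`
tends to `(M!)^(1/M)` as `ε → 0⁺`. -/
theorem omega_ratio_tendsto (M κ : ℕ) (hM : 1 ≤ M) (hκ : 1 ≤ κ) (δ : ℝ) (hδ : 0 < δ) :
    Tendsto
      (fun ε : ℝ =>
        (δ * (M.factorial : ℝ) ^ ((1 : ℝ) / (M : ℝ))
            * (-Real.log (1 - ε ^ ((1 : ℝ) / (M : ℝ)))))
          / ((κ : ℝ) * δ * ((1 - ε ^ ((1 : ℝ) / (M : ℝ))) ^ (-(1 : ℝ) / (κ : ℝ)) - 1)))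
      (𝓝[>] 0) (𝓝 ((M.factorial : ℝ) ^ ((1 : ℝ) / (M : ℝ)))) := by
  have hM' : (0 : ℝ) < 1 / M := by
    have : (0 : ℝ) < M := by exact_mod_cast hM
    positivity
  have hκ' : (κ : ℝ) ≠ 0 := Nat.cast_ne_zero.mpr (by omega)
  have hlim := ((tendsto_neg_log_div_mul_rpow_neg_inv_sub_one hκ').comp
    (tendsto_one_sub_rpow_nhdsGT_zero hM')).const_mul ((M.factorial : ℝ) ^ ((1 : ℝ) / M))
  rw [mul_one] at hlim
  refine hlim.congr fun ε => ?_
  simp only [Function.comp_apply]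
  rw [mul_comm (κ : ℝ) δ, mul_assoc δ, mul_assoc δ, mul_div_mul_left _ _ hδ.ne', mul_div_assoc]
end
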